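/- In the infinite snake S_∞ there is no quadruple (x,y,z,t) of elements with x V y, y H z, z V t, and (x,t) ∈ P \ H, where V, H are the snake's vertical and horizontal edge relations and P is the snake ordering. Equivalently: whenever x V y, y H z, and z V t hold in S_∞ and x <_S t, then t is the horizontal successor of x, i.e., x H t. -/
import Mathlib


/-- The snake (boustrophedon) ordering on pairs of natural numbers. -/
def snakeLt (p q : ℕ × ℕ) : Prop :=
  p.1 < q.1 ∨ (p.1 = q.1 ∧ Odd p.1 ∧ p.2 < q.2) ∨ (p.1 = q.1 ∧ Even p.1 ∧ q.2 < p.2)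

/-- The infinite snake domain. -/
def snakeDom : Set (ℕ × ℕ) :=
  {p | (Even p.1 ∧ p.2 ≤ p.1) ∨ (Odd p.1 ∧ p.2 ≤ p.1 + 1)}

/-- The horizontal relation of the snake: (n,m) to (n+1,m), both in the domain. -/
def Hrel (x y : ℕ × ℕ) : Prop :=
  x ∈ snakeDom ∧ y ∈ snakeDom ∧ y.1 = x.1 + 1 ∧ y.2 = x.2

/-- The vertical relation of the snake. -/
def Vrel (x y : ℕ × ℕ) : Prop :=
  x ∈ snakeDom ∧ y ∈ snakeDom ∧ x.1 = y.1 ∧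
    ((Odd x.1 ∧ y.2 = x.2 + 1) ∨ (Even x.1 ∧ x.2 = y.2 + 1))

/-- In the infinite snake there is no quadruple (x,y,z,t) with x V y, y H z,
z V t and (x,t) ∈ P \ H: whenever x V y, y H z, z V t and x <_S t, then x H t. -/
theorem snake_query_closure :
    ∀ x y z t : ℕ × ℕ, Vrel x y → Hrel y z → Vrel z t → snakeLt x t → Hrel x t := by
  rintro ⟨n, a⟩ ⟨n', b⟩ ⟨m, c⟩ ⟨m', d⟩ h1 h2 h3 h4
  simp only [Vrel, Hrel, snakeLt, snakeDom, Set.mem_setOf_eq, Nat.odd_iff, Nat.even_iff] at *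
  omega
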